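/- For a prime p and complex α, β, γ with Re(α), Re(β) > 0 and Re(γ) > 1/2, one has Σ_{b=0}^∞ p^{−2bγ} Σ_{n₁+n₂ = 2b+1, n₁,n₂ ≥ 0} τ(p^{n₁})τ(p^{n₂}) p^{−n₁α − n₂β} · p^{2b+1/2−(n₁+n₂)} = p^{γ−1/2} / ((1 − p^{−2α−2γ})²(1 − p^{−2β−2γ})²) · [2p^{−α−γ}(1 + p^{−2β−2γ}) + 2p^{−β−γ}(1 + p^{−2α−2γ})]. -/

import Mathlib

/-!
With `u = p^(-α-γ)` and `v = p^(-β-γ)`, the `b`-th term is `p^(γ-1/2)` times the degree `2b+1`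
coefficient of the Cauchy product of `∑ (n+1) uⁿ = (1-u)⁻²` and `∑ (n+1) vⁿ = (1-v)⁻²`, which
converges since `‖u‖, ‖v‖ < 1`. Summing only the odd coefficients of `F(u, v) = (1-u)⁻²(1-v)⁻²`
gives `(F(u, v) - F(-u, -v)) / 2`, which simplifies to the right-hand side.
-/

open Complex Finset Filter Asymptotics

/-- `f m - (-1) ^ m * f m` vanishes at even `m` and is `2 * f m` at odd `m`. -/
theorem HasSum.odd_of_alternating {K : Type*} [Field K] [TopologicalSpace K] [IsTopologicalRing K]
    [NeZero (2 : K)] {f : ℕ → K} {a a' : K} (hf : HasSum f a)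
    (hf' : HasSum (fun m => (-1) ^ m * f m) a') :
    HasSum (fun b => f (2 * b + 1)) ((a - a') / 2) := by
  have hodd : ∀ m ∉ Set.range (fun b : ℕ => 2 * b + 1), f m - (-1) ^ m * f m = 0 := by
    rintro m hm
    obtain ⟨b, rfl⟩ : Even m := by
      simpa [← Nat.not_odd_iff_even, Odd, eq_comm] using hm
    simp [← two_mul, pow_mul]
  have hinj : Function.Injective (fun b : ℕ => 2 * b + 1) := fun a b h => by simp_all
  have := (hinj.hasSum_iff hodd).2 (hf.sub hf')
  convert this.div_const 2 using 2 with b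
  simp [pow_succ, pow_mul]

section Convolution

variable {𝕜 : Type*} [NormedField 𝕜]

theorem hasSum_succ_mul_geometric_of_norm_lt_one {x : 𝕜} (hx : ‖x‖ < 1) :
    HasSum (fun n : ℕ => ((n + 1 : ℕ) : 𝕜) * x ^ n) (1 / (1 - x) ^ 2) := by
  simpa using hasSum_choose_mul_geometric_of_norm_lt_one 1 hx

theorem summable_norm_succ_mul_geometric_of_norm_lt_one {x : 𝕜} (hx : ‖x‖ < 1) :
    Summable fun n : ℕ => ‖((n + 1 : ℕ) : 𝕜) * x ^ n‖ := by
  refine summable_norm_mul_geometric_of_norm_lt_one (k := 1) hx ?_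
  refine IsBigO.of_bound 2 (eventually_ge_atTop 1 |>.mono fun n hn => ?_)
  have : (1 : ℝ) ≤ n := by exact_mod_cast hn
  simp only [Nat.cast_add, Nat.cast_one, pow_one, Real.norm_eq_abs]
  rw [abs_of_nonneg (by positivity), abs_of_nonneg (by positivity)]
  linarith

/-- With `τ(pⁿ) = n + 1`, this is `∑_{n₁+n₂=m} τ(p^n₁) τ(p^n₂) x^n₁ y^n₂`, the `m`-th
coefficient of `(1 - x)⁻² (1 - y)⁻²`. -/
noncomputable def tauConvolution (x y : 𝕜) (m : ℕ) : 𝕜 :=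
  ∑ k ∈ range (m + 1), (((k + 1 : ℕ) : 𝕜) * x ^ k) * (((m - k + 1 : ℕ) : 𝕜) * y ^ (m - k))

theorem hasSum_tauConvolution {x y : 𝕜} (hx : ‖x‖ < 1) (hy : ‖y‖ < 1) :
    HasSum (tauConvolution x y) (1 / ((1 - x) ^ 2 * (1 - y) ^ 2)) := by
  have hfx := hasSum_succ_mul_geometric_of_norm_lt_one hx
  have hfy := hasSum_succ_mul_geometric_of_norm_lt_one hy
  have hnx := summable_norm_succ_mul_geometric_of_norm_lt_one hx
  have hny := summable_norm_succ_mul_geometric_of_norm_lt_one hy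
  have := hasSum_sum_range_mul_of_summable_norm' hnx hfx.summable hny hfy.summable
  rwa [hfx.tsum_eq, hfy.tsum_eq, one_div_mul_one_div] at this

theorem tauConvolution_neg (x y : 𝕜) (m : ℕ) :
    tauConvolution (-x) (-y) m = (-1) ^ m * tauConvolution x y m := by
  rw [tauConvolution, tauConvolution, mul_sum]
  refine sum_congr rfl fun k hk => ?_
  have hkm : k + (m - k) = m := Nat.add_sub_cancel' (Nat.lt_succ_iff.1 (mem_range.1 hk))
  rw [neg_pow x, neg_pow y, ← hkm, pow_add, hkm]
  ring

theorem hasSum_tauConvolution_odd [NeZero (2 : 𝕜)] {x y : 𝕜} (hx : ‖x‖ < 1) (hy : ‖y‖ < 1) :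
    HasSum (fun b => tauConvolution x y (2 * b + 1))
      (2 * (x * (1 + y ^ 2) + y * (1 + x ^ 2)) / ((1 - x ^ 2) ^ 2 * (1 - y ^ 2) ^ 2)) := by
  have hx' : ‖-x‖ < 1 := by rwa [norm_neg]
  have hy' : ‖-y‖ < 1 := by rwa [norm_neg]
  have hneg := hasSum_tauConvolution hx' hy'
  rw [funext (tauConvolution_neg x y)] at hneg
  convert (hasSum_tauConvolution hx hy).odd_of_alternating hneg using 1
  have hx₁ := (isUnit_one_sub_of_norm_lt_one hx).ne_zero
  have hy₁ := (isUnit_one_sub_of_norm_lt_one hy).ne_zero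
  have hx₂ := (isUnit_one_sub_of_norm_lt_one hx').ne_zero
  have hy₂ := (isUnit_one_sub_of_norm_lt_one hy').ne_zero
  rw [sub_neg_eq_add] at hx₂ hy₂
  rw [sub_neg_eq_add, sub_neg_eq_add, show (1 : 𝕜) - x ^ 2 = (1 - x) * (1 + x) by ring,
    show (1 : 𝕜) - y ^ 2 = (1 - y) * (1 + y) by ring]
  field_simp
  ring

end Convolution

theorem norm_natCast_cpow_lt_one {n : ℕ} (hn : 1 < n) {z : ℂ} (hz : z.re < 0) :
    ‖(n : ℂ) ^ z‖ < 1 := by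
  rw [norm_natCast_cpow_of_pos (by omega)]
  exact Real.rpow_lt_one_of_one_lt_of_neg (by exact_mod_cast hn) hz

theorem natCast_cpow_mul_sum_eq_tauConvolution {p : ℕ} (hp : p ≠ 0) (α β γ : ℂ) (b : ℕ) :
    (p : ℂ) ^ (-2 * (b : ℂ) * γ) *
      ∑ k ∈ range (2 * b + 2),
        ((k + 1 : ℕ) : ℂ) * ((2 * b + 1 - k + 1 : ℕ) : ℂ) *
          (p : ℂ) ^ (-(k : ℂ) * α - ((2 * b + 1 - k : ℕ) : ℂ) * β) *
          (p : ℂ) ^ (((2 * b : ℕ) : ℂ) + 1 / 2 - ((2 * b + 1 : ℕ) : ℂ))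
    = (p : ℂ) ^ (γ - 1 / 2) *
        tauConvolution ((p : ℂ) ^ (-α - γ)) ((p : ℂ) ^ (-β - γ)) (2 * b + 1) := by
  have hp' : (p : ℂ) ≠ 0 := Nat.cast_ne_zero.2 hp
  rw [tauConvolution, mul_sum, mul_sum]
  refine sum_congr rfl fun k hk => ?_
  have hkb : k ≤ 2 * b + 1 := Nat.lt_succ_iff.1 (mem_range.1 hk)
  rw [← cpow_nat_mul, ← cpow_nat_mul]
  calc _ = ((k + 1 : ℕ) : ℂ) * ((2 * b + 1 - k + 1 : ℕ) : ℂ) * (p : ℂ) ^ (-2 * (b : ℂ) * γ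
          + (-(k : ℂ) * α - ((2 * b + 1 - k : ℕ) : ℂ) * β)
          + (((2 * b : ℕ) : ℂ) + 1 / 2 - ((2 * b + 1 : ℕ) : ℂ))) := by
        rw [cpow_add _ _ hp', cpow_add _ _ hp']
        ring
    _ = ((k + 1 : ℕ) : ℂ) * ((2 * b + 1 - k + 1 : ℕ) : ℂ) * (p : ℂ) ^ (γ - 1 / 2
          + (k : ℂ) * (-α - γ) + ((2 * b + 1 - k : ℕ) : ℂ) * (-β - γ)) := by
        push_cast [Nat.cast_sub hkb]
        ring_nf
    _ = _ := by
        rw [cpow_add _ _ hp', cpow_add _ _ hp']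
        ring

/-- For a prime `p`, `Re α, Re β > 0`, `Re γ > 1/2`:
`Σ_{b≥0} p^{−2bγ} Σ_{n₁+n₂=2b+1} τ(p^{n₁})τ(p^{n₂}) p^{−n₁α−n₂β} p^{2b+1/2−(n₁+n₂)}
  = p^{γ−1/2}/((1 − p^{−2α−2γ})²(1 − p^{−2β−2γ})²)
      · (2p^{−α−γ}(1 + p^{−2β−2γ}) + 2p^{−β−γ}(1 + p^{−2α−2γ}))`. -/
theorem odd_power_gauss_sum_series (p : ℕ) (hp : p.Prime)
    (α β γ : ℂ) (hα : 0 < α.re) (hβ : 0 < β.re) (hγ : 1/2 < γ.re) :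
    (∑' b : ℕ, (p:ℂ)^(-2*(b:ℂ)*γ) *
      ∑ n1 ∈ Finset.range (2*b + 2),
        ((n1 + 1 : ℕ) : ℂ) * ((2*b + 1 - n1 + 1 : ℕ) : ℂ) *
          (p:ℂ)^(-(n1:ℂ)*α - ((2*b + 1 - n1 : ℕ) : ℂ)*β) *
          (p:ℂ)^(((2*b : ℕ) : ℂ) + 1/2 - ((2*b + 1 : ℕ) : ℂ)))
    = (p:ℂ)^(γ - 1/2) / ((1 - (p:ℂ)^(-2*α-2*γ))^2 * (1 - (p:ℂ)^(-2*β-2*γ))^2) *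
        (2*(p:ℂ)^(-α-γ) * (1 + (p:ℂ)^(-2*β-2*γ))
          + 2*(p:ℂ)^(-β-γ) * (1 + (p:ℂ)^(-2*α-2*γ))) := by
  have hu : ‖(p : ℂ) ^ (-α - γ)‖ < 1 :=
    norm_natCast_cpow_lt_one hp.one_lt (by simp only [sub_re, neg_re]; linarith)
  have hv : ‖(p : ℂ) ^ (-β - γ)‖ < 1 :=
    norm_natCast_cpow_lt_one hp.one_lt (by simp only [sub_re, neg_re]; linarith)
  have hsq (s : ℂ) : (p : ℂ) ^ (-2 * s - 2 * γ) = ((p : ℂ) ^ (-s - γ)) ^ 2 := by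
    rw [← cpow_nat_mul]
    ring_nf
  rw [tsum_congr (natCast_cpow_mul_sum_eq_tauConvolution hp.ne_zero α β γ), tsum_mul_left,
    (hasSum_tauConvolution_odd hu hv).tsum_eq, hsq α, hsq β]
  ring
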